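/- Define f_{a,i} = (1/(2i)) ∑_{d | i, d odd} μ(d) (2a)^{i/d} and g_{a,i} = 2i · f_{a,i} / (2a)^i, where μ is the Möbius function. Then for all integers a ≥ 1 and i ≥ 1, exp(-4·(2a)^{-2i/3}) ≤ g_{a,i} ≤ exp(4·(2a)^{-2i/3}). -/

import Mathlib

/-!
Splitting off the divisor `d = 1` gives `g_{a,i} = 1 + S / (2a)^i`, where `S` runs over the odd
divisors `d ≥ 3` of `i`. The exponents `i / d` in `S` are distinct and at most `i / 3`, so `|S|` is
bounded by a geometric sum, `|S| ≤ 2 (2a)^⌊i/3⌋`, whence `|g_{a,i} - 1| ≤ 2t` with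
`t = (2a)^{-2i/3}`. For `i ≥ 3` we have `t ≤ 1/4`, and there `1 - 2t ≥ exp(-4t)`; for `i ≤ 2` the
sum `S` is empty and `g_{a,i} = 1`.
-/

/-- `f_{a,i} = (1/(2i)) ∑_{d ∣ i, d odd} μ(d) (2a)^{i/d}`. -/
noncomputable def fai (a i : ℕ) : ℝ :=
  (1 / (2 * (i : ℝ))) * ∑ d ∈ (Nat.divisors i).filter (fun d => Odd d),
    ((ArithmeticFunction.moebius d : ℤ) : ℝ) * (2 * (a : ℝ)) ^ (i / d)

/-- `g_{a,i} = 2i f_{a,i} / (2a)^i`. -/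
noncomputable def gai (a i : ℕ) : ℝ :=
  2 * (i : ℝ) * fai a i / (2 * (a : ℝ)) ^ i

open ArithmeticFunction Finset
open scoped ArithmeticFunction.Moebius

lemma geom_sum_range_succ_le_two_mul_pow {R : Type*} [Semiring R] [PartialOrder R]
    [IsOrderedRing R] {b : R} (hb : 2 ≤ b) (n : ℕ) :
    ∑ k ∈ range (n + 1), b ^ k ≤ 2 * b ^ n := by
  induction n with
  | zero => simp [one_le_two]
  | succ n ih =>
    have hb0 : 0 ≤ b := zero_le_two.trans hb
    calc ∑ k ∈ range (n + 2), b ^ k = ∑ k ∈ range (n + 1), b ^ k + b ^ (n + 1) :=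
          sum_range_succ _ _
      _ ≤ 2 * b ^ n + b ^ (n + 1) := add_le_add_left ih _
      _ ≤ b * b ^ n + b ^ (n + 1) :=
          add_le_add_left (mul_le_mul_of_nonneg_right hb (pow_nonneg hb0 n)) _
      _ = 2 * b ^ (n + 1) := by rw [← pow_succ', two_mul]

lemma sum_pow_le_two_mul_pow {R : Type*} [Semiring R] [PartialOrder R] [IsOrderedRing R]
    {b : R} (hb : 2 ≤ b) {s : Finset ℕ} {n : ℕ} (hs : ∀ k ∈ s, k ≤ n) :
    ∑ k ∈ s, b ^ k ≤ 2 * b ^ n :=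
  (sum_le_sum_of_subset_of_nonneg (fun k hk ↦ mem_range_succ_iff.mpr (hs k hk))
    fun _ _ _ ↦ pow_nonneg (zero_le_two.trans hb) _).trans
    (geom_sum_range_succ_le_two_mul_pow hb n)

lemma abs_sum_moebius_mul_pow_div_le {b : ℝ} (hb : 2 ≤ b) {n m : ℕ} (hm : 0 < m)
    {s : Finset ℕ} (hs : s ⊆ n.divisors) (hms : ∀ d ∈ s, m ≤ d) :
    |∑ d ∈ s, (μ d : ℝ) * b ^ (n / d)| ≤ 2 * b ^ (n / m) := by
  have hb0 : 0 ≤ b := zero_le_two.trans hb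
  have hinj : Set.InjOn (n / ·) s := fun d₁ h₁ d₂ h₂ (h : n / d₁ = n / d₂) ↦ by
    obtain ⟨hd₁, hn⟩ := Nat.mem_divisors.mp (hs h₁)
    rw [← Nat.div_div_self hd₁ hn, h, Nat.div_div_self (Nat.dvd_of_mem_divisors (hs h₂)) hn]
  calc |∑ d ∈ s, (μ d : ℝ) * b ^ (n / d)|
      ≤ ∑ d ∈ s, |(μ d : ℝ) * b ^ (n / d)| := abs_sum_le_sum_abs _ _
    _ ≤ ∑ d ∈ s, b ^ (n / d) := sum_le_sum fun d _ ↦ by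
        rw [abs_mul, abs_of_nonneg (pow_nonneg hb0 _)]
        exact mul_le_of_le_one_left (pow_nonneg hb0 _) (by exact_mod_cast abs_moebius_le_one)
    _ = ∑ k ∈ s.image (n / ·), b ^ k := (sum_image hinj).symm
    _ ≤ 2 * b ^ (n / m) := sum_pow_le_two_mul_pow hb fun k hk ↦ by
        obtain ⟨d, hd, rfl⟩ := mem_image.mp hk
        exact Nat.div_le_div_left (hms d hd) hm

lemma three_le_of_mem_filter_odd_divisors_erase_one {n d : ℕ}
    (hd : d ∈ (n.divisors.filter Odd).erase 1) : 3 ≤ d := by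
  obtain ⟨hd1, hd⟩ := mem_erase.mp hd
  obtain ⟨-, k, rfl⟩ := mem_filter.mp hd
  omega

lemma gai_eq_one_add {a i : ℕ} (ha : a ≠ 0) (hi : i ≠ 0) :
    gai a i = 1 + (∑ d ∈ (i.divisors.filter Odd).erase 1, (μ d : ℝ) * (2 * (a : ℝ)) ^ (i / d))
      / (2 * (a : ℝ)) ^ i := by
  have h1 : 1 ∈ i.divisors.filter Odd := mem_filter.mpr ⟨Nat.one_mem_divisors.mpr hi, odd_one⟩
  have hpow : (2 * (a : ℝ)) ^ i ≠ 0 := by positivity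
  rw [gai, fai, ← add_sum_erase _ _ h1]
  field_simp
  simp

lemma pow_div_three_div_pow_le_rpow {b : ℝ} (hb : 1 ≤ b) (n : ℕ) :
    b ^ (n / 3) / b ^ n ≤ b ^ (-(2 * (n : ℝ) / 3)) := by
  have hb0 : 0 < b := zero_lt_one.trans_le hb
  rw [div_le_iff₀ (pow_pos hb0 n), ← Real.rpow_natCast b n, ← Real.rpow_add hb0,
    ← Real.rpow_natCast]
  refine Real.rpow_le_rpow_of_exponent_le hb (Nat.cast_div_le.trans (le_of_eq ?_))
  push_cast
  ring

lemma abs_gai_sub_one_le {a i : ℕ} (ha : 1 ≤ a) (hi : 1 ≤ i) :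
    |gai a i - 1| ≤ 2 * (2 * (a : ℝ)) ^ (-(2 * (i : ℝ) / 3)) := by
  have hb : (2 : ℝ) ≤ 2 * a := by norm_cast; omega
  rw [gai_eq_one_add (by omega) (by omega), add_sub_cancel_left, abs_div,
    abs_of_pos (pow_pos (two_pos.trans_le hb) i)]
  calc _ ≤ 2 * (2 * (a : ℝ)) ^ (i / 3) / (2 * (a : ℝ)) ^ i :=
        div_le_div_of_nonneg_right (abs_sum_moebius_mul_pow_div_le hb three_pos
          ((erase_subset _ _).trans (filter_subset _ _))
          fun _ ↦ three_le_of_mem_filter_odd_divisors_erase_one) (by positivity)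
    _ ≤ _ := by
      rw [mul_div_assoc]
      exact mul_le_mul_of_nonneg_left (pow_div_three_div_pow_le_rpow (by linarith) i) zero_le_two

lemma gai_eq_one_of_lt_three {a i : ℕ} (ha : a ≠ 0) (hi : i ≠ 0) (hi3 : i < 3) : gai a i = 1 := by
  rw [gai_eq_one_add ha hi, add_eq_left]
  convert zero_div _
  refine sum_eq_zero fun d hd ↦ absurd (three_le_of_mem_filter_odd_divisors_erase_one hd) ?_
  have := Nat.divisor_le (mem_of_mem_filter _ (mem_of_mem_erase hd))
  omega

lemma rpow_neg_two_mul_div_three_le_quarter {b : ℝ} (hb : 2 ≤ b) {n : ℕ} (hn : 3 ≤ n) :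
    b ^ (-(2 * (n : ℝ) / 3)) ≤ 1 / 4 := by
  have hn' : (3 : ℝ) ≤ n := by exact_mod_cast hn
  calc b ^ (-(2 * (n : ℝ) / 3)) ≤ 2 ^ (-(2 * (n : ℝ) / 3)) :=
        Real.rpow_le_rpow_of_nonpos two_pos hb (by linarith)
    _ ≤ 2 ^ (-2 : ℝ) := Real.rpow_le_rpow_of_exponent_le one_le_two (by linarith)
    _ = 1 / 4 := by norm_num [Real.rpow_neg]

/-- `exp(4t) ≥ 1 + 4t` and `(1 - 2t)(1 + 4t) = 1 + 2t(1 - 4t) ≥ 1`. -/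
lemma exp_neg_four_mul_le_one_sub_two_mul {t : ℝ} (ht : 0 ≤ t) (ht4 : t ≤ 1 / 4) :
    Real.exp (-(4 * t)) ≤ 1 - 2 * t := by
  rw [Real.exp_neg, inv_le_iff_one_le_mul₀' (Real.exp_pos _)]
  nlinarith [Real.add_one_le_exp (4 * t)]

theorem gai_exp_bounds (a i : ℕ) (ha : 1 ≤ a) (hi : 1 ≤ i) :
    Real.exp (-(4 * (2 * (a : ℝ)) ^ (-(2 * (i : ℝ) / 3)))) ≤ gai a i
      ∧ gai a i ≤ Real.exp (4 * (2 * (a : ℝ)) ^ (-(2 * (i : ℝ) / 3))) := by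
  set t := (2 * (a : ℝ)) ^ (-(2 * (i : ℝ) / 3))
  have ht : 0 ≤ t := by positivity
  rcases lt_or_ge i 3 with hi3 | hi3
  · rw [gai_eq_one_of_lt_three (by omega) (by omega) hi3]
    exact ⟨Real.exp_le_one_iff.mpr (by linarith), Real.one_le_exp (by linarith)⟩
  · have hg := abs_le.mp (abs_gai_sub_one_le ha hi)
    have ht4 : t ≤ 1 / 4 := rpow_neg_two_mul_div_three_le_quarter (by norm_cast; omega) hi3
    constructor
    · linarith [exp_neg_four_mul_le_one_sub_two_mul ht ht4]
    · linarith [Real.add_one_le_exp (4 * t)]
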